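/- arXiv:2109.07321 — 2 statements merged into one kernel-verified Lean document; each statement's English description precedes it below -/
import Mathlib

section
/- Let σ and σ' be finite sets with σ ⊆ σ', let Δ = σ' \ σ be nonempty, and let σ* be a nonempty finite reference set. Define F(A) = 2·|A ∩ σ*| / (|A| + |σ*|) and P(Δ) = |Δ ∩ σ*| / |Δ|. Then F(σ) ≤ F(σ') if and only if (1/2)·F(σ) ≤ P(Δ). -/
/-!
Write `a = |σ ∩ σ*|`, `s = |σ|`, and `b = |Δ ∩ σ*|`, `d = |Δ|`. Since `σ'` is the disjoint union
of `σ` and `Δ`, the f-measure of `σ'` is twice the mediant `(a + b) / ((s + |σ*|) + d)` of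
`a / (s + |σ*|) = F(σ) / 2` and `b / d = P(Δ)`. A mediant is at least its first fraction exactly
when the second fraction is.
-/

open Finset

theorem div_le_add_div_add_iff_div_le_div {K : Type*} [Field K] [LinearOrder K]
    [IsStrictOrderedRing K] {a b c d : K} (hb : 0 < b) (hd : 0 < d) :
    a / b ≤ (a + c) / (b + d) ↔ a / b ≤ c / d := by
  rw [div_le_div_iff₀ hb (add_pos hb hd), div_le_div_iff₀ hb hd]
  constructor <;> intro h <;> linarith

namespace Finset

variable {α : Type*} [DecidableEq α] {s t : Finset α}

theorem card_eq_card_add_card_sdiff (h : s ⊆ t) : #t = #s + #(t \ s) := by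
  rw [add_comm, card_sdiff_add_card_eq_card h]

theorem card_inter_eq_card_inter_add_card_sdiff_inter (h : s ⊆ t) (u : Finset α) :
    #(t ∩ u) = #(s ∩ u) + #((t \ s) ∩ u) := by
  rw [card_eq_card_add_card_sdiff (inter_subset_inter_right h)]
  exact congrArg (#(s ∩ u) + #·) (inf_sdiff_distrib_right t s u).symm

end Finset

theorem fmeasure_monotone_iff {α : Type*} [DecidableEq α]
    (σ σ' σstar : Finset α) (hsub : σ ⊆ σ') (hΔ : (σ' \ σ).Nonempty)
    (hstar : σstar.Nonempty) :
    (2 * ((σ ∩ σstar).card : ℚ) / (σ.card + σstar.card) ≤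
        2 * ((σ' ∩ σstar).card : ℚ) / (σ'.card + σstar.card) ↔
      (1 / 2) * (2 * ((σ ∩ σstar).card : ℚ) / (σ.card + σstar.card)) ≤
        (((σ' \ σ) ∩ σstar).card : ℚ) / (σ' \ σ).card) := by
  have hpos : (0 : ℚ) < #σ + #σstar := by
    have : (0 : ℚ) < #σstar := by exact_mod_cast hstar.card_pos
    positivity
  have hΔpos : (0 : ℚ) < #(σ' \ σ) := by exact_mod_cast hΔ.card_pos
  rw [card_eq_card_add_card_sdiff hsub, card_inter_eq_card_inter_add_card_sdiff_inter hsub]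
  push_cast
  rw [mul_div_assoc, mul_div_assoc, mul_le_mul_iff_right₀ two_pos, ← mul_assoc,
    one_div_mul_cancel two_ne_zero, one_mul, add_right_comm (#σ : ℚ)]
  exact div_le_add_div_add_iff_div_le_div hpos hΔpos
end

section
/- Let σ and σ' be nonempty finite sets with σ ⊆ σ', Δ = σ' \ σ nonempty, and σ* a finite reference set. If P(σ) ≤ P(Δ) then the f-measure satisfies F(σ) ≤ F(σ'), where P(A) = |A ∩ σ*|/|A| and F(A) = 2·|A ∩ σ*|/(|A| + |σ*|) with σ* nonempty. -/
/-! Half the f-measure of `σ` is `a / (s + m)` with `a = |σ ∩ σ*|`, `s = |σ|`, `m = |σ*|`, which is at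
most the precision `a / s` of `σ`. Half the f-measure of `σ'` is the mediant `(a + b) / ((s + m) + d)` of
`a / (s + m)` and the precision `b / d` of `Δ = σ' \ σ`, so it dominates `a / (s + m)` as soon as
`a / (s + m) ≤ b / d`, which the hypothesis `P(σ) ≤ P(Δ)` guarantees. -/

open Finset

theorem div_le_add_div_add_of_div_le_div {K : Type*} [Field K] [LinearOrder K]
    [IsStrictOrderedRing K] {a b c d : K} (hc : 0 < c) (hd : 0 < d) (h : a / c ≤ b / d) :
    a / c ≤ (a + b) / (c + d) := by
  rw [div_le_div_iff₀ hc hd] at h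
  rw [div_le_div_iff₀ hc (add_pos hc hd)]
  linear_combination h

theorem Finset.card_inter_eq_card_inter_add_card_sdiff_inter_s8 {α : Type*} [DecidableEq α]
    {s t : Finset α} (h : s ⊆ t) (u : Finset α) : #(t ∩ u) = #(s ∩ u) + #(t \ s ∩ u) := by
  rw [← card_union_of_disjoint (disjoint_sdiff.mono inter_subset_left inter_subset_left),
    ← union_inter_distrib_right, union_sdiff_of_subset h]

section Retrieval

variable {α : Type*} [DecidableEq α]

def precision (A ref : Finset α) : ℚ := #(A ∩ ref) / #A

def fMeasure (A ref : Finset α) : ℚ := 2 * #(A ∩ ref) / (#A + #ref)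

theorem half_fMeasure_eq (A ref : Finset α) : fMeasure A ref / 2 = #(A ∩ ref) / (#A + #ref) := by
  rw [fMeasure]; ring

theorem half_fMeasure_le_precision {A : Finset α} (hA : A.Nonempty) (ref : Finset α) :
    fMeasure A ref / 2 ≤ precision A ref := by
  rw [half_fMeasure_eq, precision]
  exact div_le_div_of_nonneg_left (by positivity) (by exact_mod_cast hA.card_pos)
    (le_add_of_nonneg_right (by positivity))

theorem fMeasure_le_fMeasure_of_half_le_precision_sdiff {s t : Finset α} (ref : Finset α)
    (hst : s ⊆ t) (hs : s.Nonempty) (hts : (t \ s).Nonempty)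
    (h : fMeasure s ref / 2 ≤ precision (t \ s) ref) : fMeasure s ref ≤ fMeasure t ref := by
  have hcard : (#t : ℚ) = #s + #(t \ s) := by
    rw [← card_sdiff_add_card_eq_card hst, Nat.cast_add, add_comm]
  have hinter : (#(t ∩ ref) : ℚ) = #(s ∩ ref) + #(t \ s ∩ ref) := by
    exact_mod_cast card_inter_eq_card_inter_add_card_sdiff_inter_s8 hst ref
  have hhalf_t : fMeasure t ref / 2 = (#(s ∩ ref) + #(t \ s ∩ ref)) / (#s + #ref + #(t \ s)) := by
    rw [half_fMeasure_eq, hcard, hinter, add_right_comm]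
  have hmediant := div_le_add_div_add_of_div_le_div
    (add_pos_of_pos_of_nonneg (by exact_mod_cast hs.card_pos) (by positivity) : (0 : ℚ) < #s + #ref)
    (by exact_mod_cast hts.card_pos) ((half_fMeasure_eq s ref).symm.trans_le h)
  rw [← half_fMeasure_eq, ← hhalf_t] at hmediant
  linarith

end Retrieval

theorem precision_cond_implies_fmeasure_mono_general {α : Type*} [DecidableEq α]
    (σ σ' σstar : Finset α) (hσ : σ.Nonempty)
    (hsub : σ ⊆ σ') (hΔ : (σ' \ σ).Nonempty)
    (hP : ((σ ∩ σstar).card : ℚ) / σ.card ≤ (((σ' \ σ) ∩ σstar).card : ℚ) / (σ' \ σ).card) :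
    2 * ((σ ∩ σstar).card : ℚ) / (σ.card + σstar.card) ≤
      2 * ((σ' ∩ σstar).card : ℚ) / (σ'.card + σstar.card) :=
  fMeasure_le_fMeasure_of_half_le_precision_sdiff σstar hsub hσ hΔ
    ((half_fMeasure_le_precision hσ σstar).trans hP)

theorem precision_cond_implies_fmeasure_mono {α : Type*} [DecidableEq α]
    (σ σ' σstar : Finset α) (hσ : σ.Nonempty) (hσ' : σ'.Nonempty)
    (hsub : σ ⊆ σ') (hΔ : (σ' \ σ).Nonempty) (hstar : σstar.Nonempty)
    (hP : ((σ ∩ σstar).card : ℚ) / σ.card ≤ (((σ' \ σ) ∩ σstar).card : ℚ) / (σ' \ σ).card) :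
    2 * ((σ ∩ σstar).card : ℚ) / (σ.card + σstar.card) ≤
      2 * ((σ' ∩ σstar).card : ℚ) / (σ'.card + σstar.card) :=
  precision_cond_implies_fmeasure_mono_general σ σ' σstar hσ hsub hΔ hP
end
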